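/- Let c be a join node of the nice tree decomposition T with children a and b (so B(a) = B(b) = B(c)), and let f ∈ P(Q). Suppose there are a positive integer M and binary vectors I_1,…,I_M ∈ {0,1}^(ℛ(a)), each satisfying the constraints relevant to T(a), with f|_a = (1/M) Σ_i I_i, and binary vectors J_1,…,J_M ∈ {0,1}^(ℛ(b)), each satisfying the constraints relevant to T(b), with f|_b = (1/M) Σ_i J_i. Then there exist binary vectors L_1,…,L_M ∈ {0,1}^(ℛ(c)), each satisfying the constraints relevant to T(c), such that f|_c = (1/M) Σ_i L_i. -/

import Mathlib

/-! Common definitions: CSP instances, configurations, nice tree decompositions,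
and the polytopes from Kolman–Koutecký. -/

/-- A constraint with scope `scope`; its satisfaction depends only on the
coordinates in the scope (it is a relation on the domains of the scope). -/
structure CSPConstraint (n : ℕ) where
  scope : Finset (Fin n)
  sat : (Fin n → ℝ) → Prop
  sat_congr : ∀ z z' : Fin n → ℝ, (∀ v ∈ scope, z v = z' v) → sat z → sat z'

/-- A CSP instance: finite real domains, hard constraints and soft constraints. -/
structure CSPInstance (n : ℕ) where
  dom : Fin n → Finset ℝ
  hard : List (CSPConstraint n)
  soft : List (CSPConstraint n)

variable {n : ℕ}

/-- The list of all constraints (hard and soft). -/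
def consList (Q : CSPInstance n) : List (CSPConstraint n) := Q.hard ++ Q.soft

/-- A feasible assignment: values in the domains, satisfying all hard constraints. -/
def Feasible (Q : CSPInstance n) (z : Fin n → ℝ) : Prop :=
  (∀ v, z v ∈ Q.dom v) ∧ ∀ C ∈ Q.hard, C.sat z

-- Configurations of a set `W` of variables: partial assignments (with `none`
-- playing the role of the symbol `λ`) defined exactly on `W`.
open Classical in
noncomputable def configs (Q : CSPInstance n) (W : Finset (Fin n)) :
    Finset (Fin n → Option ℝ) :=
  (Fintype.piFinset fun v =>
      if v ∈ W then (Q.dom v).image some else ({none} : Finset (Option ℝ))).filter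
    (fun K => ∀ C ∈ Q.hard, C.scope ⊆ W → C.sat (fun v => (K v).getD 0))

/-- Restriction `K↾_W` of a configuration: coordinates outside `W` are set to `λ`. -/
def restrictCfg (K : Fin n → Option ℝ) (W : Finset (Fin n)) : Fin n → Option ℝ :=
  fun v => if v ∈ W then K v else none

/-- A (rooted) nice tree: leaves, introduce nodes, forget nodes and join nodes. -/
inductive NiceTree (n : ℕ) : Type
  | leaf (v : Fin n) : NiceTree n
  | introduce (v : Fin n) (t : NiceTree n) : NiceTree n
  | forget (v : Fin n) (t : NiceTree n) : NiceTree n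
  | join (t₁ t₂ : NiceTree n) : NiceTree n

namespace NiceTree

/-- The bag of the root node of a nice tree. -/
def bag : NiceTree n → Finset (Fin n)
  | leaf v => {v}
  | introduce v t => insert v (bag t)
  | forget v t => (bag t).erase v
  | join t₁ _ => bag t₁

/-- All vertices appearing in bags of the tree. -/
def verts : NiceTree n → Finset (Fin n)
  | leaf v => {v}
  | introduce v t => insert v (verts t)
  | forget _ t => verts t
  | join t₁ t₂ => verts t₁ ∪ verts t₂

/-- Number of nodes of the tree. -/
def size : NiceTree n → ℕ
  | leaf _ => 1
  | introduce _ t => size t + 1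
  | forget _ t => size t + 1
  | join t₁ t₂ => size t₁ + size t₂ + 1

/-- Structural validity of a nice tree (in particular, the connectivity
condition of tree decompositions: an introduced vertex does not occur below,
and vertices shared by the two subtrees of a join lie in its bag). -/
def valid : NiceTree n → Prop
  | leaf _ => True
  | introduce v t => v ∉ verts t ∧ valid t
  | forget v t => v ∈ bag t ∧ valid t
  | join t₁ t₂ => bag t₁ = bag t₂ ∧ verts t₁ ∩ verts t₂ ⊆ bag t₁ ∧ valid t₁ ∧ valid t₂

/-- `isSubtree s t`: `s` is a node (subtree) of `t`. -/
def isSubtree (s : NiceTree n) : NiceTree n → Prop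
  | leaf v => s = leaf v
  | introduce v t => s = introduce v t ∨ isSubtree s t
  | forget v t => s = forget v t ∨ isSubtree s t
  | join t₁ t₂ => s = join t₁ t₂ ∨ isSubtree s t₁ ∨ isSubtree s t₂

-- The configurations relevant to the subtree: `ℛ(a) = ⋃_{b ∈ T(a)} 𝒦(B(b))`.
open Classical in
noncomputable def relConfigs (Q : CSPInstance n) : NiceTree n → Finset (Fin n → Option ℝ)
  | leaf v => configs Q {v}
  | introduce v t => configs Q (insert v (bag t)) ∪ relConfigs Q t
  | forget v t => configs Q ((bag t).erase v) ∪ relConfigs Q t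
  | join t₁ t₂ => relConfigs Q t₁ ∪ relConfigs Q t₂

end NiceTree

/-- A valid nice tree decomposition for the CSP instance `Q`: every variable is
in some bag and every constraint scope is contained in some bag. -/
def IsNiceTreeDecompCSP (Q : CSPInstance n) (T : NiceTree n) : Prop :=
  T.valid ∧ (∀ v : Fin n, v ∈ T.verts) ∧
    ∀ C ∈ consList Q, ∃ s : NiceTree n, s.isSubtree T ∧ C.scope ⊆ s.bag

/-- A valid nice tree decomposition of a graph `G`: every vertex is in some bag
and both endpoints of every edge lie in a common bag. -/
def IsNiceTreeDecompGraph (G : SimpleGraph (Fin n)) (T : NiceTree n) : Prop :=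
  T.valid ∧ (∀ v : Fin n, v ∈ T.verts) ∧
    ∀ u v : Fin n, G.Adj u v → ∃ s : NiceTree n, s.isSubtree T ∧ u ∈ s.bag ∧ v ∈ s.bag

/-- The constraint graph of a CSP instance. -/
def constraintGraph (Q : CSPInstance n) : SimpleGraph (Fin n) where
  Adj u v := u ≠ v ∧ ∃ C ∈ consList Q, u ∈ C.scope ∧ v ∈ C.scope
  symm := by
    constructor
    rintro u v ⟨hne, C, hC, hu, hv⟩
    exact ⟨hne.symm, C, hC, hv, hu⟩
  loopless := by
    constructor
    rintro v ⟨hne, -⟩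
    exact hne rfl

-- The LP constraints of `P(Q)` relevant to the subtree `t`: bag equations and
-- consistency equations at introduce and forget nodes of `t`.
def RelCons (Q : CSPInstance n) (f : (Fin n → Option ℝ) → ℝ) : NiceTree n → Prop
  | .leaf v => ∑ K ∈ configs Q {v}, f K = 1
  | .introduce v t =>
      RelCons Q f t ∧ (∑ K ∈ configs Q (insert v t.bag), f K = 1) ∧
      ∀ K ∈ configs Q t.bag,
        ∑ K' ∈ (configs Q (insert v t.bag)).filter
            (fun K' => restrictCfg K' t.bag = K), f K' = f K
  | .forget v t =>
      RelCons Q f t ∧ (∑ K ∈ configs Q (t.bag.erase v), f K = 1) ∧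
      ∀ K ∈ configs Q (t.bag.erase v),
        ∑ K' ∈ (configs Q t.bag).filter
            (fun K' => restrictCfg K' (t.bag.erase v) = K), f K' = f K
  | .join t₁ t₂ => RelCons Q f t₁ ∧ RelCons Q f t₂

/-- All the constraints of `P(Q)` relevant to the subtree `t`, including the
bounds `0 ≤ f(K) ≤ 1` for relevant configurations. -/
def RelevantLP (Q : CSPInstance n) (t : NiceTree n) (f : (Fin n → Option ℝ) → ℝ) : Prop :=
  RelCons Q f t ∧ ∀ K ∈ t.relConfigs Q, 0 ≤ f K ∧ f K ≤ 1

/-- The polytope `P(Q) ⊆ ℝ^{𝒦_ℬ}` (coordinates outside `𝒦_ℬ` are zero). -/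
def Ppoly (Q : CSPInstance n) (T : NiceTree n) : Set ((Fin n → Option ℝ) → ℝ) :=
  {f | RelevantLP Q T f ∧ ∀ K, K ∉ T.relConfigs Q → f K = 0}

/-- Extended feasible assignments `(z, h)`. -/
def ExtAssignments (Q : CSPInstance n) :
    Set ((Fin n → ℝ) × (Fin Q.soft.length → ℝ)) :=
  {p | Feasible Q p.1 ∧ ∀ i : Fin Q.soft.length,
      ((Q.soft.get i).sat p.1 ∧ p.2 i = 1) ∨ (¬ (Q.soft.get i).sat p.1 ∧ p.2 i = 0)}

/-- `CSP(Q)`: the convex hull of all extended feasible assignments. -/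
def CSPpolytope (Q : CSPInstance n) : Set ((Fin n → ℝ) × (Fin Q.soft.length → ℝ)) :=
  convexHull ℝ (ExtAssignments Q)

/-- `CSP'(Q)`: the convex hull of all feasible assignments. -/
def CSPpolytope' (Q : CSPInstance n) : Set (Fin n → ℝ) :=
  convexHull ℝ {z | Feasible Q z}

/-- The `y`-variables of the basic LP: one for each `v ∈ V` and `i ∈ D_v`. -/
abbrev YType (Q : CSPInstance n) := (v : Fin n) → {i : ℝ // i ∈ Q.dom v} → ℝ

/-- The `g`-variables of the basic LP: one for each constraint `C_U ∈ 𝒞 ∪ ℋ`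
and each configuration `K ∈ 𝒦(U)`. -/
abbrev GType (Q : CSPInstance n) :=
  (c : Fin (consList Q).length) →
    {K : Fin n → Option ℝ // K ∈ configs Q ((consList Q).get c).scope} → ℝ

/-- The basic LP (1)–(3). -/
def BasicLP (Q : CSPInstance n) (p : YType Q × GType Q) : Prop :=
  (∀ v : Fin n, ∑ i ∈ (Q.dom v).attach, p.1 v i = 1) ∧
  (∀ c : Fin (consList Q).length, ∀ v ∈ ((consList Q).get c).scope,
    ∀ (i : ℝ) (hi : i ∈ Q.dom v),
      ∑ K ∈ (configs Q ((consList Q).get c).scope).attach.filter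
          (fun K => K.1 v = some i), p.2 c K = p.1 v ⟨i, hi⟩) ∧
  (∀ v i, 0 ≤ p.1 v i ∧ p.1 v i ≤ 1) ∧ (∀ c K, 0 ≤ p.2 c K ∧ p.2 c K ≤ 1)

/-- Integrality (all coordinates in `{0,1}`) of a `(y, g)` vector. -/
def IntegralYG (Q : CSPInstance n) (p : YType Q × GType Q) : Prop :=
  (∀ v i, p.1 v i = 0 ∨ p.1 v i = 1) ∧ ∀ c K, p.2 c K = 0 ∨ p.2 c K = 1

-- The map sending a (feasible) assignment `z` to the `(y, g)` vector of the basic LP.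
open Classical in
noncomputable def exMap (Q : CSPInstance n) (z : Fin n → ℝ) : YType Q × GType Q :=
  (fun v i => if z v = i.1 then 1 else 0,
   fun c K => if ∀ u ∈ ((consList Q).get c).scope, K.1 u = some (z u) then 1 else 0)

/-!
A binary vector `g` satisfying the constraints relevant to a subtree `t` takes the value 1 at
exactly one configuration `κ` of the root bag, and this choice determines `g` on every relevant
configuration `K ∈ 𝒦(W)` with `W ⊆ B(t)`: `g K = 1` iff `K = κ↾_W`. Going down the tree, the
consistency equations hand the choice to the child, and the connectivity condition keeps `W`
inside the child's bag.

At a join node, a configuration relevant to both subtrees lives on vertices common to both, hence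
on a subset of the common bag, so it is determined by the root choice. Since `f|_a` and `f|_b`
agree on the bag, every configuration of the bag is chosen by as many `I_i` as `J_j`; after
permuting the `J_j`, the vectors `I_i` and `J_i` choose the same configuration, agree on
`ℛ(a) ∩ ℛ(b)`, and glue to `L_i`.
-/

open Finset

theorem exists_equiv_comp_eq_of_card_filter_eq {ι α : Type*} [Fintype ι] [DecidableEq α]
    {p q : ι → α} (h : ∀ x, #{i | p i = x} = #{i | q i = x}) :
    ∃ e : ι ≃ ι, ∀ i, q (e i) = p i :=
  ⟨Equiv.ofFiberEquiv fun x =>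
      Fintype.equivOfCardEq (by simpa only [Fintype.card_subtype] using h x),
    Equiv.ofFiberEquiv_map _⟩

section Binary

variable {α : Type*} {g : α → ℝ} {s : Finset α}

theorem exists_eq_one_of_sum_eq_one (hg : ∀ x, g x = 0 ∨ g x = 1) (hs : ∑ x ∈ s, g x = 1) :
    ∃ x ∈ s, g x = 1 := by
  obtain ⟨x, hx, hx0⟩ := exists_ne_zero_of_sum_ne_zero (hs ▸ one_ne_zero)
  exact ⟨x, hx, (hg x).resolve_left hx0⟩

theorem nonneg_of_eq_zero_or_eq_one (hg : ∀ x, g x = 0 ∨ g x = 1) (x : α) : 0 ≤ g x :=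
  (hg x).elim ge_of_eq fun h => h ▸ zero_le_one

theorem eq_of_sum_eq_one (hg : ∀ x, g x = 0 ∨ g x = 1) (hs : ∑ x ∈ s, g x = 1)
    {x y : α} (hx : x ∈ s) (hy : y ∈ s) (hgx : g x = 1) (hgy : g y = 1) : x = y := by
  by_contra hxy
  have := add_le_sum (fun z _ => nonneg_of_eq_zero_or_eq_one hg z) hx hy hxy
  linarith

theorem eq_ite_of_sum_eq_one [DecidableEq α] (hg : ∀ x, g x = 0 ∨ g x = 1)
    (hs : ∑ x ∈ s, g x = 1) {x y : α} (hx : x ∈ s) (hy : y ∈ s) (hgx : g x = 1) :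
    g y = if x = y then 1 else 0 := by
  split_ifs with hxy
  · exact hxy ▸ hgx
  · exact (hg y).resolve_right fun hgy => hxy (eq_of_sum_eq_one hg hs hx hy hgx hgy)

theorem eq_of_eq_one_iff {x y : ℝ} (hx : x = 0 ∨ x = 1) (hy : y = 0 ∨ y = 1)
    (h : x = 1 ↔ y = 1) : x = y := by
  rcases hx with rfl | rfl
  · exact (hy.resolve_right fun hy1 => zero_ne_one (h.2 hy1)).symm
  · exact (h.1 rfl).symm

theorem exists_equiv_eq_of_sum_eq {ι : Type*} [Fintype ι] {I J : ι → α → ℝ}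
    (hI : ∀ i x, I i x = 0 ∨ I i x = 1) (hJ : ∀ i x, J i x = 0 ∨ J i x = 1)
    (hIs : ∀ i, ∑ x ∈ s, I i x = 1) (hJs : ∀ i, ∑ x ∈ s, J i x = 1)
    (h : ∀ x ∈ s, ∑ i, I i x = ∑ i, J i x) : ∃ e : ι ≃ ι, ∀ i, ∀ x ∈ s, J (e i) x = I i x := by
  classical
  choose p hps hp using fun i => exists_eq_one_of_sum_eq_one (hI i) (hIs i)
  choose q hqs hq using fun i => exists_eq_one_of_sum_eq_one (hJ i) (hJs i)
  have hIp : ∀ i, ∀ x ∈ s, I i x = if p i = x then 1 else 0 :=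
    fun i x hx => eq_ite_of_sum_eq_one (hI i) (hIs i) (hps i) hx (hp i)
  have hJq : ∀ i, ∀ x ∈ s, J i x = if q i = x then 1 else 0 :=
    fun i x hx => eq_ite_of_sum_eq_one (hJ i) (hJs i) (hqs i) hx (hq i)
  obtain ⟨e, he⟩ := exists_equiv_comp_eq_of_card_filter_eq (p := p) (q := q) fun x => by
    by_cases hx : x ∈ s
    · have hcount := h x hx
      rw [sum_congr rfl fun i _ => hIp i x hx, sum_congr rfl fun i _ => hJq i x hx,
        sum_boole, sum_boole] at hcount
      exact_mod_cast hcount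
    · rw [filter_false_of_mem fun i _ (hi : p i = x) => hx (hi ▸ hps i),
        filter_false_of_mem fun i _ (hi : q i = x) => hx (hi ▸ hqs i)]
  exact ⟨e, fun i x hx => by rw [hJq _ x hx, hIp i x hx, he]⟩

end Binary

theorem exists_eq_on_of_eq_on_inter {α β : Type*} {s t : Set α} {g g' : α → β}
    (h : ∀ x ∈ s, x ∈ t → g x = g' x) :
    ∃ L : α → β, (∀ x ∈ s, L x = g x) ∧ (∀ x ∈ t, L x = g' x) ∧ ∀ x, L x = g x ∨ L x = g' x := by
  classical
  refine ⟨s.piecewise g g', fun x hx => s.piecewise_eq_of_mem _ _ hx, fun x hx => ?_,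
    fun x => ?_⟩
  · by_cases hxs : x ∈ s
    · rw [s.piecewise_eq_of_mem _ _ hxs, h x hxs hx]
    · exact s.piecewise_eq_of_notMem _ _ hxs
  · by_cases hxs : x ∈ s
    · exact Or.inl (s.piecewise_eq_of_mem _ _ hxs)
    · exact Or.inr (s.piecewise_eq_of_notMem _ _ hxs)

section Configs

variable {Q : CSPInstance n} {K κ : Fin n → Option ℝ} {W W' : Finset (Fin n)}

theorem ne_none_iff_of_mem_configs (hK : K ∈ configs Q W) (v : Fin n) :
    K v ≠ none ↔ v ∈ W := by
  classical
  have hv := Fintype.mem_piFinset.1 (mem_filter.1 hK).1 v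
  by_cases hvW : v ∈ W
  · obtain ⟨x, -, hx⟩ := by simpa [hvW] using hv
    simp [hvW, ← hx]
  · simpa [hvW] using hv

theorem eq_of_mem_configs (hW : K ∈ configs Q W) (hW' : K ∈ configs Q W') : W = W' := by
  ext v
  rw [← ne_none_iff_of_mem_configs hW, ← ne_none_iff_of_mem_configs hW']

theorem restrictCfg_eq_self (hK : K ∈ configs Q W) : restrictCfg K W = K := by
  funext v
  by_cases hv : v ∈ W
  · simp [restrictCfg, hv]
  · simpa [restrictCfg, hv, eq_comm] using (ne_none_iff_of_mem_configs hK v).not.2 hv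

theorem restrictCfg_restrictCfg (h : W ⊆ W') :
    restrictCfg (restrictCfg K W') W = restrictCfg K W := by
  funext v
  by_cases hv : v ∈ W
  · simp [restrictCfg, hv, h hv]
  · simp [restrictCfg, hv]

theorem restrictCfg_mem_configs (hK : K ∈ configs Q W') (h : W ⊆ W') :
    restrictCfg K W ∈ configs Q W := by
  classical
  obtain ⟨hdom, hsat⟩ := mem_filter.1 hK
  refine mem_filter.2 ⟨Fintype.mem_piFinset.2 fun v => ?_, fun C hC hCW => ?_⟩
  · have hv := Fintype.mem_piFinset.1 hdom v
    by_cases hvW : v ∈ W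
    · simpa [restrictCfg, hvW, h hvW] using hv
    · simp [restrictCfg, hvW]
  · refine C.sat_congr _ _ (fun v hv => ?_) (hsat C hC (hCW.trans h))
    simp [restrictCfg, hCW hv]

theorem eq_one_iff_of_mem_configs_bag {g : (Fin n → Option ℝ) → ℝ}
    (hg : ∀ K, g K = 0 ∨ g K = 1) {B : Finset (Fin n)} (hs : ∑ K ∈ configs Q B, g K = 1)
    (hκ : κ ∈ configs Q B) (hgκ : g κ = 1) (hK : K ∈ configs Q B) (hKW : K ∈ configs Q W) : g K = 1 ↔ restrictCfg κ W = K := by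
  rw [eq_of_mem_configs hKW hK, restrictCfg_eq_self hκ]
  exact ⟨fun hgK => eq_of_sum_eq_one hg hs hκ hK hgκ hgK, fun h => h ▸ hgκ⟩

end Configs

namespace NiceTree

theorem bag_subset_verts (t : NiceTree n) : t.bag ⊆ t.verts := by
  induction t with
  | leaf v => exact Subset.refl _
  | introduce v t ih => exact insert_subset_insert v ih
  | forget v t ih => exact (erase_subset _ _).trans ih
  | join t₁ t₂ ih₁ ih₂ => exact ih₁.trans subset_union_left

theorem valid_of_isSubtree {s t : NiceTree n} (hs : s.isSubtree t) (ht : t.valid) : s.valid := by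
  induction t with
  | leaf v => exact hs ▸ ht
  | introduce v t ih => exact hs.elim (· ▸ ht) (ih · ht.2)
  | forget v t ih => exact hs.elim (· ▸ ht) (ih · ht.2)
  | join t₁ t₂ ih₁ ih₂ => exact hs.elim (· ▸ ht) (·.elim (ih₁ · ht.2.2.1) (ih₂ · ht.2.2.2))

variable {Q : CSPInstance n}

theorem configs_bag_subset_relConfigs (t : NiceTree n) : configs Q t.bag ⊆ t.relConfigs Q := by
  cases t with
  | leaf v => exact Subset.refl _
  | introduce v t => exact subset_union_left
  | forget v t => exact subset_union_left
  | join t₁ t₂ => exact (configs_bag_subset_relConfigs t₁).trans subset_union_left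

theorem exists_configs_of_mem_relConfigs {t : NiceTree n} {K : Fin n → Option ℝ}
    (hK : K ∈ t.relConfigs Q) : ∃ W ⊆ t.verts, K ∈ configs Q W := by
  induction t with
  | leaf v => exact ⟨{v}, Subset.refl _, hK⟩
  | introduce v t ih =>
    rcases mem_union.1 hK with hK | hK
    · exact ⟨_, insert_subset_insert v t.bag_subset_verts, hK⟩
    · obtain ⟨W, hW, hKW⟩ := ih hK
      exact ⟨W, hW.trans (subset_insert v _), hKW⟩
  | forget v t ih =>
    rcases mem_union.1 hK with hK | hK
    · exact ⟨_, (erase_subset v _).trans t.bag_subset_verts, hK⟩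
    · exact ih hK
  | join t₁ t₂ ih₁ ih₂ =>
    rcases mem_union.1 hK with hK | hK
    · obtain ⟨W, hW, hKW⟩ := ih₁ hK
      exact ⟨W, hW.trans subset_union_left, hKW⟩
    · obtain ⟨W, hW, hKW⟩ := ih₂ hK
      exact ⟨W, hW.trans subset_union_right, hKW⟩

theorem relCons_sum_bag {g : (Fin n → Option ℝ) → ℝ} {t : NiceTree n} (h : RelCons Q g t) :
    ∑ K ∈ configs Q t.bag, g K = 1 := by
  induction t with
  | leaf v => exact h
  | introduce v t ih => exact h.2.1
  | forget v t ih => exact h.2.1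
  | join t₁ t₂ ih₁ ih₂ => exact ih₁ h.1

theorem relCons_congr {g g' : (Fin n → Option ℝ) → ℝ} {t : NiceTree n}
    (h : ∀ K ∈ t.relConfigs Q, g K = g' K) (hg : RelCons Q g t) : RelCons Q g' t := by
  induction t with
  | leaf v => exact (sum_congr rfl h).symm.trans hg
  | introduce v t ih =>
    have hroot : ∀ K ∈ configs Q (insert v t.bag), g K = g' K :=
      fun K hK => h K (mem_union_left _ hK)
    have hchild : ∀ K ∈ t.relConfigs Q, g K = g' K := fun K hK => h K (mem_union_right _ hK)
    obtain ⟨hrel, hsum, hcons⟩ := hg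
    refine ⟨ih hchild hrel, by rwa [← sum_congr rfl hroot], fun K hK => ?_⟩
    rw [← sum_congr rfl fun K' hK' => hroot K' (mem_filter.1 hK').1,
      ← hchild K (t.configs_bag_subset_relConfigs hK)]
    exact hcons K hK
  | forget v t ih =>
    have hroot : ∀ K ∈ configs Q (t.bag.erase v), g K = g' K :=
      fun K hK => h K (mem_union_left _ hK)
    have hchild : ∀ K ∈ t.relConfigs Q, g K = g' K := fun K hK => h K (mem_union_right _ hK)
    obtain ⟨hrel, hsum, hcons⟩ := hg
    refine ⟨ih hchild hrel, by rwa [← sum_congr rfl hroot], fun K hK => ?_⟩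
    rw [← sum_congr rfl fun K' hK' =>
        hchild K' (t.configs_bag_subset_relConfigs (mem_filter.1 hK').1), ← hroot K hK]
    exact hcons K hK
  | join t₁ t₂ ih₁ ih₂ =>
    exact ⟨ih₁ (fun K hK => h K (mem_union_left _ hK)) hg.1,
      ih₂ (fun K hK => h K (mem_union_right _ hK)) hg.2⟩

theorem relevantLP_congr {g g' : (Fin n → Option ℝ) → ℝ} {t : NiceTree n}
    (h : ∀ K ∈ t.relConfigs Q, g K = g' K) (hg : RelevantLP Q t g) : RelevantLP Q t g' :=
  ⟨relCons_congr h hg.1, fun K hK => h K hK ▸ hg.2 K hK⟩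

theorem relevantLP_join {g : (Fin n → Option ℝ) → ℝ} {a b : NiceTree n} :
    RelevantLP Q (join a b) g ↔ RelevantLP Q a g ∧ RelevantLP Q b g := by
  simp only [RelevantLP, RelCons, relConfigs, mem_union]
  grind

theorem eq_one_iff_restrictCfg_eq {g : (Fin n → Option ℝ) → ℝ} (hg : ∀ K, g K = 0 ∨ g K = 1)
    {t : NiceTree n} (ht : t.valid) (hrel : RelCons Q g t) {κ : Fin n → Option ℝ}
    (hκ : κ ∈ configs Q t.bag) (hgκ : g κ = 1) {K : Fin n → Option ℝ} {W : Finset (Fin n)}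
    (hK : K ∈ t.relConfigs Q) (hKW : K ∈ configs Q W) (hW : W ⊆ t.bag) :
    g K = 1 ↔ restrictCfg κ W = K := by
  induction t generalizing κ K W with
  | leaf v => exact eq_one_iff_of_mem_configs_bag hg hrel hκ hgκ hK hKW
  | introduce v t ih =>
    obtain ⟨hrelt, hsum, hcons⟩ := hrel
    rcases mem_union.1 hK with hK | hK
    · exact eq_one_iff_of_mem_configs_bag hg hsum hκ hgκ hK hKW
    have hWt : W ⊆ t.bag := by
      obtain ⟨W', hW', hKW'⟩ := exists_configs_of_mem_relConfigs hK
      rw [eq_of_mem_configs hKW hKW'] at hW ⊢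
      intro w hw
      exact (mem_insert.1 (hW hw)).resolve_left fun hvw => ht.1 (hvw ▸ hW' hw)
    have hκt : restrictCfg κ t.bag ∈ configs Q t.bag :=
      restrictCfg_mem_configs hκ (subset_insert _ _)
    have hgκt : g (restrictCfg κ t.bag) = 1 := by
      have : g κ ≤ g (restrictCfg κ t.bag) := hcons _ hκt ▸
        single_le_sum (fun K' _ => nonneg_of_eq_zero_or_eq_one hg K') (mem_filter.2 ⟨hκ, rfl⟩)
      exact (hg _).resolve_left fun h0 => by linarith
    rw [ih ht.2 hrelt hκt hgκt hK hKW hWt, restrictCfg_restrictCfg hWt]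
  | forget v t ih =>
    obtain ⟨hrelt, hsum, hcons⟩ := hrel
    rcases mem_union.1 hK with hK | hK
    · exact eq_one_iff_of_mem_configs_bag hg hsum hκ hgκ hK hKW
    obtain ⟨κ', hκ'mem, hgκ'⟩ := exists_eq_one_of_sum_eq_one hg ((hcons κ hκ).trans hgκ)
    obtain ⟨hκ', rfl⟩ := mem_filter.1 hκ'mem
    rw [ih ht.2 hrelt hκ' hgκ' hK hKW (hW.trans (erase_subset _ _)),
      restrictCfg_restrictCfg (W' := t.bag.erase v) hW]
  | join t₁ t₂ ih₁ ih₂ =>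
    have hbag : t₁.bag = t₂.bag := ht.1
    rcases mem_union.1 hK with hK | hK
    · exact ih₁ ht.2.2.1 hrel.1 hκ hgκ hK hKW hW
    · exact ih₂ ht.2.2.2 hrel.2 (hbag ▸ hκ) hgκ hK hKW (hbag ▸ hW)

theorem eq_of_mem_relConfigs_inter {a b : NiceTree n} (hab : (join a b).valid)
    {g g' : (Fin n → Option ℝ) → ℝ} (hg : ∀ K, g K = 0 ∨ g K = 1)
    (hg' : ∀ K, g' K = 0 ∨ g' K = 1) (hga : RelCons Q g a) (hgb : RelCons Q g' b)
    {κ : Fin n → Option ℝ} (hκ : κ ∈ configs Q a.bag) (hgκ : g κ = 1) (hg'κ : g' κ = 1)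
    {K : Fin n → Option ℝ} (hKa : K ∈ a.relConfigs Q) (hKb : K ∈ b.relConfigs Q) :
    g K = g' K := by
  obtain ⟨hbag, hinter, hva, hvb⟩ := hab
  obtain ⟨W, hWa, hKW⟩ := exists_configs_of_mem_relConfigs hKa
  obtain ⟨W', hWb, hKW'⟩ := exists_configs_of_mem_relConfigs hKb
  have hW : W ⊆ a.bag := fun w hw =>
    hinter (mem_inter.2 ⟨hWa hw, hWb (eq_of_mem_configs hKW hKW' ▸ hw)⟩)
  refine eq_of_eq_one_iff (hg K) (hg' K) ?_
  rw [eq_one_iff_restrictCfg_eq hg hva hga hκ hgκ hKa hKW hW,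
    eq_one_iff_restrictCfg_eq hg' hvb hgb (hbag ▸ hκ) hg'κ hKb hKW (hbag ▸ hW)]

end NiceTree

open NiceTree

theorem join_step_general (n : ℕ) (Q : CSPInstance n) (T : NiceTree n)
    (hT : IsNiceTreeDecompCSP Q T) (a b : NiceTree n)
    (hsub : (NiceTree.join a b).isSubtree T)
    (f : (Fin n → Option ℝ) → ℝ)
    (M : ℕ) (hM : 0 < M)
    (I : Fin M → ((Fin n → Option ℝ) → ℝ))
    (hIbin : ∀ i K, I i K = 0 ∨ I i K = 1)
    (hIrel : ∀ i, RelevantLP Q a (I i))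
    (hIavg : ∀ K ∈ a.relConfigs Q, f K = (1 / (M : ℝ)) * ∑ i, I i K)
    (J : Fin M → ((Fin n → Option ℝ) → ℝ))
    (hJbin : ∀ i K, J i K = 0 ∨ J i K = 1)
    (hJrel : ∀ i, RelevantLP Q b (J i))
    (hJavg : ∀ K ∈ b.relConfigs Q, f K = (1 / (M : ℝ)) * ∑ i, J i K) :
    ∃ L : Fin M → ((Fin n → Option ℝ) → ℝ),
      (∀ i K, L i K = 0 ∨ L i K = 1) ∧
      (∀ i, RelevantLP Q (NiceTree.join a b) (L i)) ∧
      ∀ K ∈ (NiceTree.join a b).relConfigs Q,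
        f K = (1 / (M : ℝ)) * ∑ i, L i K := by
  have hab : (join a b).valid := valid_of_isSubtree hsub hT.1
  have hbag : a.bag = b.bag := hab.1
  have hIsum (i : Fin M) : ∑ K ∈ configs Q a.bag, I i K = 1 := relCons_sum_bag (hIrel i).1
  have hJsum (i : Fin M) : ∑ K ∈ configs Q a.bag, J i K = 1 := hbag ▸ relCons_sum_bag (hJrel i).1
  obtain ⟨e, he⟩ := exists_equiv_eq_of_sum_eq hIbin hJbin hIsum hJsum fun K hK =>
    mul_left_cancel₀ (one_div_ne_zero (Nat.cast_ne_zero.2 hM.ne')) <|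
      (hIavg K (configs_bag_subset_relConfigs a hK)).symm.trans
        (hJavg K (configs_bag_subset_relConfigs b (hbag ▸ hK)))
  have hagree (i : Fin M) : ∀ K ∈ a.relConfigs Q, K ∈ b.relConfigs Q → I i K = J (e i) K := by
    obtain ⟨κ, hκ, hIκ⟩ := exists_eq_one_of_sum_eq_one (hIbin i) (hIsum i)
    exact fun K hKa hKb => eq_of_mem_relConfigs_inter hab (hIbin i) (hJbin (e i)) (hIrel i).1
      (hJrel (e i)).1 hκ hIκ ((he i κ hκ).trans hIκ) hKa hKb
  choose L hLa hLb hL using fun i => exists_eq_on_of_eq_on_inter (hagree i)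
  refine ⟨L, fun i K => (hL i K).elim (· ▸ hIbin i K) (· ▸ hJbin (e i) K), fun i =>
    relevantLP_join.2 ⟨relevantLP_congr (fun K hK => (hLa i K hK).symm) (hIrel i),
      relevantLP_congr (fun K hK => (hLb i K hK).symm) (hJrel (e i))⟩, fun K hK => ?_⟩
  rcases mem_union.1 hK with hKa | hKb
  · rw [hIavg K hKa, sum_congr rfl fun i _ => hLa i K hKa]
  · rw [hJavg K hKb, ← e.sum_comp, sum_congr rfl fun i _ => hLb i K hKb]

/-- Inductive step at a join node. -/
theorem join_step (n : ℕ) (Q : CSPInstance n) (T : NiceTree n)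
    (hT : IsNiceTreeDecompCSP Q T) (a b : NiceTree n)
    (hsub : (NiceTree.join a b).isSubtree T)
    (f : (Fin n → Option ℝ) → ℝ) (hf : f ∈ Ppoly Q T)
    (M : ℕ) (hM : 0 < M)
    (I : Fin M → ((Fin n → Option ℝ) → ℝ))
    (hIbin : ∀ i K, I i K = 0 ∨ I i K = 1)
    (hIrel : ∀ i, RelevantLP Q a (I i))
    (hIavg : ∀ K ∈ a.relConfigs Q, f K = (1 / (M : ℝ)) * ∑ i, I i K)
    (J : Fin M → ((Fin n → Option ℝ) → ℝ))
    (hJbin : ∀ i K, J i K = 0 ∨ J i K = 1)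
    (hJrel : ∀ i, RelevantLP Q b (J i))
    (hJavg : ∀ K ∈ b.relConfigs Q, f K = (1 / (M : ℝ)) * ∑ i, J i K) :
    ∃ L : Fin M → ((Fin n → Option ℝ) → ℝ),
      (∀ i K, L i K = 0 ∨ L i K = 1) ∧
      (∀ i, RelevantLP Q (NiceTree.join a b) (L i)) ∧
      ∀ K ∈ (NiceTree.join a b).relConfigs Q,
        f K = (1 / (M : ℝ)) * ∑ i, L i K :=
  join_step_general n Q T hT a b hsub f M hM I hIbin hIrel hIavg J hJbin hJrel hJavg
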